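/- Assume the payoff parameters satisfy p3 > p1 > p4 > p2 (prisoner's dilemma). Let S be a configuration on the toroidal grid G_{N,M} (N, M ≥ 3) and let c be a control such that for every node v having at least one neighbor u with S(u) = D, c(v) is a neighbor of v with S(c(v)) = D of maximal payoff among all neighbors u ∼ v with S(u) = D. Then: (a) for every node v with S(v) = D, F(S,c)(v) = D; (b) for every node v with S(v) = C whose payoff P_S(v) is strictly less than the maximal payoff among its neighbors u with S(u) = D, F(S,c)(v) = D; (c) for every node v with S(v) = C having at most one neighbor u with S(u) = C, F(S,c)(v) = D. -/
import Mathlib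


open MeasureTheory

namespace EvolGame

/-- A strategy: cooperation `C` or defection `D`. -/
inductive Strat : Type
  | C : Strat
  | D : Strat
  deriving DecidableEq

/-- Node set of the toroidal grid `G_{N,M}`. -/
abbrev Node (N M : ℕ) := ZMod N × ZMod M

/-- A strategy configuration. -/
abbrev Config (N M : ℕ) := Node N M → Strat

/-- Adjacency on the toroidal grid. -/
def adj {N M : ℕ} (u v : Node N M) : Prop :=
  u - v = (1, 0) ∨ u - v = (-1, 0) ∨ u - v = (0, 1) ∨ u - v = (0, -1)

/-- The (at most four) neighbors of a node. -/
def neighbors {N M : ℕ} (v : Node N M) : Finset (Node N M) :=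
  {v + (1, 0), v + (-1, 0), v + (0, 1), v + (0, -1)}

/-- Number of cooperating neighbors of `v` under configuration `S`. -/
def coopCount {N M : ℕ} (S : Config N M) (v : Node N M) : ℕ :=
  ((neighbors v).filter (fun u => S u = Strat.C)).card

/-- Payoff of node `v` under configuration `S` with payoff parameters `p1,p2,p3,p4`. -/
def payoff (p1 p2 p3 p4 : ℝ) {N M : ℕ} (S : Config N M) (v : Node N M) : ℝ :=
  if S v = Strat.C then
    (coopCount S v : ℝ) * p1 + (4 - (coopCount S v : ℝ)) * p2
  else
    (coopCount S v : ℝ) * p3 + (4 - (coopCount S v : ℝ)) * p4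

/-- A control assigns to each node one of its neighbors. -/
def IsControl {N M : ℕ} (c : Node N M → Node N M) : Prop :=
  ∀ v, adj (c v) v

open Classical in
/-- The controlled update `F(S,c)`. -/
noncomputable def F (p1 p2 p3 p4 : ℝ) {N M : ℕ} (S : Config N M)
    (c : Node N M → Node N M) : Config N M :=
  fun v =>
    if payoff p1 p2 p3 p4 S v < payoff p1 p2 p3 p4 S (c v) then S (c v) else S v

/-- The set `R(S)` of configurations reachable from `S` in one imitation step. -/
def Rset (p1 p2 p3 p4 : ℝ) {N M : ℕ} (S : Config N M) : Set (Config N M) :=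
  {S' | ∀ v, S' v = S v ∨
    ∃ u, adj u v ∧ S' v = S u ∧ payoff p1 p2 p3 p4 S v < payoff p1 p2 p3 p4 S u}

/-- `Ω*`: adjacent nodes with different strategies have equal payoffs. -/
def OmegaStar (p1 p2 p3 p4 : ℝ) (N M : ℕ) : Set (Config N M) :=
  {S | ∀ u v, adj u v → S u ≠ S v →
    payoff p1 p2 p3 p4 S u = payoff p1 p2 p3 p4 S v}

/-- Controlled trajectory of the CEG. -/
noncomputable def traj (p1 p2 p3 p4 : ℝ) {N M : ℕ} (S0 : Config N M)
    (c : ℕ → Node N M → Node N M) : ℕ → Config N M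
  | 0 => S0
  | t + 1 => F p1 p2 p3 p4 (traj p1 p2 p3 p4 S0 c t) (c t)

/-- `A` is reachable from `S0` under the CEG within `T` steps. -/
def ReachableWithin (p1 p2 p3 p4 : ℝ) {N M : ℕ} (A : Set (Config N M))
    (S0 : Config N M) (T : ℕ) : Prop :=
  ∃ t ≤ T, ∃ c : ℕ → Node N M → Node N M,
    (∀ s, IsControl (c s)) ∧ traj p1 p2 p3 p4 S0 c t ∈ A

/-- The discrete σ-algebra on the finite configuration space. -/
instance {N M : ℕ} : MeasurableSpace (Config N M) := ⊤

/-- `μ` is the law of the time-homogeneous Markov chain with kernel `κ` started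
at `S0`, characterized by its finite-dimensional (cylinder) distributions. -/
def IsChainLaw {N M : ℕ} (κ : Config N M → PMF (Config N M)) (S0 : Config N M)
    (μ : Measure (ℕ → Config N M)) : Prop :=
  IsProbabilityMeasure μ ∧
  ∀ (t : ℕ) (s : ℕ → Config N M), s 0 = S0 →
    μ {ω | ∀ i ≤ t, ω i = s i} = ∏ i ∈ Finset.range t, κ (s i) (s (i + 1))

/-- An admissible imitation kernel with margin `ε`. -/
def IsAdmissible (p1 p2 p3 p4 : ℝ) {N M : ℕ} (ε : ℝ)
    (κ : Config N M → PMF (Config N M)) : Prop :=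
  (∀ (S : Config N M) (c : Node N M → Node N M), IsControl c →
      ENNReal.ofReal ε ≤ κ S (F p1 p2 p3 p4 S c)) ∧
  (∀ S : Config N M, ∑' S' : Rset p1 p2 p3 p4 S, κ S (S' : Config N M) = 1)

open Classical in
/-- The `W`-frozen controlled update. -/
noncomputable def FW (p1 p2 p3 p4 : ℝ) {N M : ℕ} (W : Set (Node N M))
    (S : Config N M) (c : Node N M → Node N M) : Config N M :=
  fun v => if v ∈ W then S v else F p1 p2 p3 p4 S c v

/-- The `W`-frozen one-step reach set `R_W(S)`. -/
def RsetW (p1 p2 p3 p4 : ℝ) {N M : ℕ} (W : Set (Node N M)) (S : Config N M) :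
    Set (Config N M) :=
  {S' | (∀ v ∈ W, S' v = S v) ∧
    ∀ v ∉ W, S' v = S v ∨
      ∃ u, adj u v ∧ S' v = S u ∧ payoff p1 p2 p3 p4 S v < payoff p1 p2 p3 p4 S u}

/-- Controlled trajectory of the `W`-frozen CEG. -/
noncomputable def trajW (p1 p2 p3 p4 : ℝ) {N M : ℕ} (W : Set (Node N M))
    (S0 : Config N M) (c : ℕ → Node N M → Node N M) : ℕ → Config N M
  | 0 => S0
  | t + 1 => FW p1 p2 p3 p4 W (trajW p1 p2 p3 p4 W S0 c t) (c t)

/-- `A` is reachable from `S0` under the `W`-frozen CEG within `T` steps. -/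
def ReachableWithinW (p1 p2 p3 p4 : ℝ) {N M : ℕ} (W : Set (Node N M))
    (A : Set (Config N M)) (S0 : Config N M) (T : ℕ) : Prop :=
  ∃ t ≤ T, ∃ c : ℕ → Node N M → Node N M,
    (∀ s, IsControl (c s)) ∧ trajW p1 p2 p3 p4 W S0 c t ∈ A

/-- A `W`-frozen admissible imitation kernel with margin `ε`. -/
def IsAdmissibleW (p1 p2 p3 p4 : ℝ) {N M : ℕ} (W : Set (Node N M)) (ε : ℝ)
    (κ : Config N M → PMF (Config N M)) : Prop :=
  (∀ (S : Config N M) (c : Node N M → Node N M), IsControl c →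
      ENNReal.ofReal ε ≤ κ S (FW p1 p2 p3 p4 W S c)) ∧
  (∀ S : Config N M, ∑' S' : RsetW p1 p2 p3 p4 W S, κ S (S' : Config N M) = 1)


lemma strat_not_C {s : Strat} (h : s ≠ Strat.C) : s = Strat.D := by
  cases s <;> simp_all

lemma zmod_one_ne_zero {N : ℕ} (hN : 3 ≤ N) : (1 : ZMod N) ≠ 0 := by
  have : ((1 : ℕ) : ZMod N) ≠ 0 := by
    haveI : NeZero N := ⟨by omega⟩
    rw [Ne, ZMod.natCast_eq_zero_iff]
    intro h; have := Nat.le_of_dvd one_pos h; omega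
  simpa using this

lemma zmod_one_ne_neg_one {N : ℕ} (hN : 3 ≤ N) : (1 : ZMod N) ≠ -1 := by
  intro h
  have h2 : ((2 : ℕ) : ZMod N) = 0 := by
    push_cast
    linear_combination h
  haveI : NeZero N := ⟨by omega⟩
  rw [ZMod.natCast_eq_zero_iff] at h2
  have := Nat.le_of_dvd two_pos h2; omega

lemma adj_of_mem_neighbors {N M : ℕ} {u v : Node N M} (h : u ∈ neighbors v) :
    adj u v := by
  simp only [neighbors, Finset.mem_insert, Finset.mem_singleton] at h
  rcases h with h | h | h | h <;>
    [exact Or.inl (by rw [h]; abel);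
     exact Or.inr (Or.inl (by rw [h]; abel));
     exact Or.inr (Or.inr (Or.inl (by rw [h]; abel)));
     exact Or.inr (Or.inr (Or.inr (by rw [h]; abel)))]

lemma mem_neighbors_of_adj {N M : ℕ} {u v : Node N M} (h : adj u v) :
    u ∈ neighbors v := by
  simp only [neighbors, Finset.mem_insert, Finset.mem_singleton]
  rcases h with h | h | h | h <;>
    [exact Or.inl (by rw [← h]; abel);
     exact Or.inr (Or.inl (by rw [← h]; abel));
     exact Or.inr (Or.inr (Or.inl (by rw [← h]; abel)));
     exact Or.inr (Or.inr (Or.inr (by rw [← h]; abel)))]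

lemma adj_symm {N M : ℕ} {u v : Node N M} (h : adj u v) : adj v u := by
  rcases h with h | h | h | h <;>
    [exact Or.inr (Or.inl (by rw [show v - u = -(u - v) by abel, h]; simp [Prod.ext_iff]));
     exact Or.inl (by rw [show v - u = -(u - v) by abel, h]; simp [Prod.ext_iff]);
     exact Or.inr (Or.inr (Or.inr (by rw [show v - u = -(u - v) by abel, h]; simp [Prod.ext_iff])));
     exact Or.inr (Or.inr (Or.inl (by rw [show v - u = -(u - v) by abel, h]; simp [Prod.ext_iff])))]

lemma neighbors_card {N M : ℕ} (hN : 3 ≤ N) (hM : 3 ≤ M) (v : Node N M) :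
    (neighbors v).card = 4 := by
  have h1N := zmod_one_ne_zero hN
  have h1M := zmod_one_ne_zero hM
  have hnN := zmod_one_ne_neg_one hN
  have hnM := zmod_one_ne_neg_one hM
  have key : ∀ a b : Node N M, v + a = v + b ↔ a = b := by
    intro a b; constructor
    · intro h; exact add_left_cancel h
    · intro h; rw [h]
  rw [neighbors]
  rw [Finset.card_insert_of_notMem, Finset.card_insert_of_notMem,
      Finset.card_insert_of_notMem, Finset.card_singleton]
  · simp only [Finset.mem_singleton, key, Prod.mk.injEq, not_and]
    exact fun _ => hnM
  · simp only [Finset.mem_insert, Finset.mem_singleton, key, Prod.mk.injEq, not_or, not_and]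
    exact ⟨fun h => absurd (neg_eq_zero.mp h) h1N, fun h => absurd (neg_eq_zero.mp h) h1N⟩
  · simp only [Finset.mem_insert, Finset.mem_singleton, key, Prod.mk.injEq, not_or, not_and]
    exact ⟨fun h => absurd h hnN, fun h => absurd h h1N, fun h => absurd h h1N⟩

lemma coopCount_le_four {N M : ℕ} (hN : 3 ≤ N) (hM : 3 ≤ M)
    (S : Config N M) (v : Node N M) : coopCount S v ≤ 4 := by
  rw [coopCount]
  calc ((neighbors v).filter (fun u => S u = Strat.C)).card
      ≤ (neighbors v).card := Finset.card_filter_le _ _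
    _ = 4 := neighbors_card hN hM v

/-- properties of the controlled update under the prisoner's
dilemma conditions, when each node having a defecting neighbor is controlled
towards a defecting neighbor of maximal payoff. -/
theorem pd_control_step {N M : ℕ} (hN : 3 ≤ N) (hM : 3 ≤ M)
    (p1 p2 p3 p4 : ℝ) (h31 : p3 > p1) (h14 : p1 > p4) (h42 : p4 > p2)
    (S : Config N M) (c : Node N M → Node N M) (hc : IsControl c)
    (hcmax : ∀ v : Node N M, (∃ u, adj u v ∧ S u = Strat.D) →
      S (c v) = Strat.D ∧
      ∀ u, adj u v → S u = Strat.D →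
        payoff p1 p2 p3 p4 S u ≤ payoff p1 p2 p3 p4 S (c v)) :
    (∀ v : Node N M, S v = Strat.D → F p1 p2 p3 p4 S c v = Strat.D) ∧
    (∀ v : Node N M, S v = Strat.C →
      (∃ u, adj u v ∧ S u = Strat.D ∧
        payoff p1 p2 p3 p4 S v < payoff p1 p2 p3 p4 S u) →
      F p1 p2 p3 p4 S c v = Strat.D) ∧
    (∀ v : Node N M, S v = Strat.C →
      ((neighbors v).filter (fun u => S u = Strat.C)).card ≤ 1 →
      F p1 p2 p3 p4 S c v = Strat.D) := by
  refine ⟨?_, ?_, ?_⟩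
  · -- (a)
    intro v hv
    by_cases hd : ∃ u, adj u v ∧ S u = Strat.D
    · obtain ⟨hcD, _⟩ := hcmax v hd
      rw [F]; split <;> simp [hv, hcD]
    · push_neg at hd
      -- all neighbors cooperate
      have hallC : ∀ u ∈ neighbors v, S u = Strat.C := by
        intro u hu
        have := hd u (adj_of_mem_neighbors hu)
        cases h : S u <;> simp_all
      have hcv : coopCount S v = 4 := by
        rw [coopCount, Finset.filter_true_of_mem hallC, neighbors_card hN hM]
      have hcvC : S (c v) = Strat.C := hallC _ (mem_neighbors_of_adj (hc v))
      have hk : (coopCount S (c v) : ℝ) ≤ 4 := by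
        exact_mod_cast coopCount_le_four hN hM S (c v)
      have hk0 : (0 : ℝ) ≤ (coopCount S (c v) : ℝ) := Nat.cast_nonneg _
      have hle : payoff p1 p2 p3 p4 S (c v) ≤ payoff p1 p2 p3 p4 S v := by
        rw [payoff, payoff, if_pos hcvC, if_neg (by simp [hv]), hcv]
        push_cast
        nlinarith
      rw [F, if_neg (not_lt.mpr hle)]
      exact hv
  · -- (b)
    intro v hv ⟨u, hadj, huD, hlt⟩
    obtain ⟨hcD, hmax⟩ := hcmax v ⟨u, hadj, huD⟩
    have := hmax u hadj huD
    rw [F, if_pos (lt_of_lt_of_le hlt this)]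
    exact hcD
  · -- (c)
    intro v hv hcard
    -- v has a defecting neighbor
    have hd : ∃ u, adj u v ∧ S u = Strat.D := by
      by_contra h
      push_neg at h
      have hallC : ∀ u ∈ neighbors v, S u = Strat.C := by
        intro u hu
        have := h u (adj_of_mem_neighbors hu)
        cases hS : S u <;> simp_all
      rw [Finset.filter_true_of_mem hallC, neighbors_card hN hM] at hcard
      omega
    obtain ⟨hcD, hmax⟩ := hcmax v hd
    -- c v has at least one cooperating neighbor, namely v
    have hvmem : v ∈ (neighbors (c v)).filter (fun u => S u = Strat.C) := by
      rw [Finset.mem_filter]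
      exact ⟨mem_neighbors_of_adj (adj_symm (hc v)), hv⟩
    have hk1 : 1 ≤ coopCount S (c v) :=
      Finset.card_pos.mpr ⟨v, hvmem⟩
    have hk1' : (1 : ℝ) ≤ (coopCount S (c v) : ℝ) := by exact_mod_cast hk1
    have hk4 : (coopCount S (c v) : ℝ) ≤ 4 := by
      exact_mod_cast coopCount_le_four hN hM S (c v)
    have hvk1 : (coopCount S v : ℝ) ≤ 1 := by
      exact_mod_cast hcard
    have hvk0 : (0 : ℝ) ≤ (coopCount S v : ℝ) := Nat.cast_nonneg _
    have hlt : payoff p1 p2 p3 p4 S v < payoff p1 p2 p3 p4 S (c v) := by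
      rw [payoff, payoff, if_pos hv, if_neg (by simp [hcD])]
      nlinarith
    rw [F, if_pos hlt]
    exact hcD

end EvolGame
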